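/- For every c ∈ (0, c̄), writing A = A(c) and ȳ = ȳ(c), one has R(x) ≤ ρ (φ_A(x_v) − c) for every x ∈ ℝ with |x − x_v| ≥ ȳ; that is, on the action region the instantaneous payoff never exceeds the discounted value φ_A(x_v) − c multiplied by ρ. -/

import Mathlib

/-- `h_A(y) = A θ e^{θ y} − A θ e^{−θ y} − 2 k₂ y`. -/
noncomputable def hFun (θ k₂ A y : ℝ) : ℝ :=
  A * θ * Real.exp (θ * y) - A * θ * Real.exp (-(θ * y)) - 2 * k₂ * y

/-- `g(A) = −A e^{θ ȳ(A)} − A e^{−θ ȳ(A)} + k₂ ȳ(A)² + 2A`. -/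
noncomputable def gFun (θ k₂ : ℝ) (ybar : ℝ → ℝ) (A : ℝ) : ℝ :=
  -A * Real.exp (θ * ybar A) - A * Real.exp (-(θ * ybar A)) + k₂ * (ybar A) ^ 2 + 2 * A

/-- `φ_A(x) = A e^{θ(x−x_v)} + A e^{−θ(x−x_v)} − k₂ (x−x_v)² + k₀`. -/
noncomputable def phiFun (θ k₂ k₀ xv A x : ℝ) : ℝ :=
  A * Real.exp (θ * (x - xv)) + A * Real.exp (-(θ * (x - xv))) - k₂ * (x - xv) ^ 2 + k₀

/-- `ξ(y) = k₂ y² − (2k₂/θ) ((e^{θy}+e^{−θy}−2)/(e^{θy}−e^{−θy})) y`. -/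
noncomputable def xiFun (θ k₂ y : ℝ) : ℝ :=
  k₂ * y ^ 2 -
    (2 * k₂ / θ) *
      ((Real.exp (θ * y) + Real.exp (-(θ * y)) - 2) /
        (Real.exp (θ * y) - Real.exp (-(θ * y)))) * y

/-- The payoff `R(x) = x − b` for `x < 0`, `−α(x−x_v)² + y_v` for `0 ≤ x ≤ Δ`, `0` for `x > Δ`. -/
noncomputable def RFun (b α xv yv Δ x : ℝ) : ℝ :=
  if x < 0 then x - b else if x ≤ Δ then -α * (x - xv) ^ 2 + yv else 0

/-! The smooth-fit equation `h_A(ȳ) = 0` says `A θ sinh (θ ȳ) = k₂ ȳ`, and `sinh t ≤ t cosh t`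
turns it into `A cosh (θ ȳ) ≥ k₂ / θ²`. This is exactly what makes `ρ (φ_A(x_v) − c)` at least
`y_v − α ȳ²`, the value of the parabola `−α (x − x_v)² + y_v` at distance `ȳ` from its vertex,
which bounds `R` on `[0, Δ] ∩ {|x − x_v| ≥ ȳ}`. Off `[0, Δ]` the bound must be nonnegative, i.e.
`ȳ ≤ Δ − x_v`: the same equation gives `c = g(A) = ξ(ȳ)`, and `ξ(y) = (4k₂/θ²) u (u − tanh u)`
with `u = θy/2` is increasing, so `ξ(ȳ) = c < ξ(Δ − x_v)` forces it. -/

open Real Set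

namespace Real

theorem hasDerivAt_tanh (x : ℝ) : HasDerivAt tanh (1 - tanh x ^ 2) x := by
  have hcosh := (cosh_pos x).ne'
  have h : HasDerivAt (fun y => sinh y / cosh y) _ x :=
    (hasDerivAt_sinh x).div (hasDerivAt_cosh x) hcosh
  simp only [← tanh_eq_sinh_div_cosh] at h
  convert h using 1
  rw [tanh_eq_sinh_div_cosh]
  field_simp

theorem monotone_id_sub_tanh : Monotone fun x : ℝ => x - tanh x := by
  have hderiv (x : ℝ) : HasDerivAt (fun x : ℝ => x - tanh x) (tanh x ^ 2) x :=
    ((hasDerivAt_id' x).sub (hasDerivAt_tanh x)).congr_deriv (by ring)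
  exact monotone_of_deriv_nonneg (fun x => (hderiv x).differentiableAt)
    fun x => (hderiv x).deriv ▸ sq_nonneg _

theorem tanh_le_self {x : ℝ} (hx : 0 ≤ x) : tanh x ≤ x := by
  simpa using monotone_id_sub_tanh hx

theorem sinh_le_mul_cosh {x : ℝ} (hx : 0 ≤ x) : sinh x ≤ x * cosh x := by
  rw [← div_le_iff₀ (cosh_pos x), ← tanh_eq_sinh_div_cosh]
  exact tanh_le_self hx

theorem monotoneOn_mul_self_sub_tanh : MonotoneOn (fun x : ℝ => x * (x - tanh x)) (Ici 0) :=
  fun _ ha _ hb hab => mul_le_mul hab (monotone_id_sub_tanh hab)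
    (sub_nonneg.2 (tanh_le_self ha)) hb

theorem cosh_two_mul_sub_one_div_sinh_two_mul (x : ℝ) :
    (cosh (2 * x) - 1) / sinh (2 * x) = tanh x := by
  rcases eq_or_ne (sinh x) 0 with hsinh | hsinh
  · simp [sinh_two_mul, hsinh, tanh_eq_sinh_div_cosh]
  have hcosh := (cosh_pos x).ne'
  rw [cosh_two_mul, sinh_two_mul, tanh_eq_sinh_div_cosh]
  field_simp
  linear_combination cosh_sq x

end Real

theorem xiFun_eq {θ : ℝ} (hθ : θ ≠ 0) (k₂ y : ℝ) :
    xiFun θ k₂ y = 4 * k₂ / θ ^ 2 * (θ * y / 2 * (θ * y / 2 - tanh (θ * y / 2))) := by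
  have hfrac : (exp (θ * y) + exp (-(θ * y)) - 2) / (exp (θ * y) - exp (-(θ * y)))
      = tanh (θ * y / 2) := by
    rw [← cosh_two_mul_sub_one_div_sinh_two_mul, mul_div_cancel₀ _ two_ne_zero, cosh_eq,
      sinh_eq]
    field_simp
  rw [xiFun, hfrac]
  field_simp
  ring

theorem xiFun_monotoneOn {θ k₂ : ℝ} (hθ : 0 < θ) (hk₂ : 0 ≤ k₂) :
    MonotoneOn (xiFun θ k₂) (Ici 0) := by
  intro a ha b hb hab
  have hmem (t : ℝ) (ht : t ∈ Ici (0 : ℝ)) : θ * t / 2 ∈ Ici (0 : ℝ) :=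
    div_nonneg (mul_nonneg hθ.le ht) zero_le_two
  rw [xiFun_eq hθ.ne', xiFun_eq hθ.ne']
  exact mul_le_mul_of_nonneg_left
    (monotoneOn_mul_self_sub_tanh (hmem a ha) (hmem b hb) (by gcongr)) (by positivity)

theorem gFun_eq_xiFun {θ k₂ A : ℝ} {ybar : ℝ → ℝ} (hθ : 0 < θ) (hy : 0 < ybar A)
    (hh : hFun θ k₂ A (ybar A) = 0) : gFun θ k₂ ybar A = xiFun θ k₂ (ybar A) := by
  have hsinh : exp (θ * ybar A) - exp (-(θ * ybar A)) ≠ 0 := by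
    have := sinh_pos_iff.2 (mul_pos hθ hy)
    rw [sinh_eq] at this
    linarith
  rw [hFun] at hh
  rw [gFun, xiFun]
  field_simp
  linear_combination -(exp (θ * ybar A) + exp (-(θ * ybar A)) - 2) * hh

theorem le_mul_cosh_of_hFun_eq_zero {θ k₂ A y : ℝ} (hθ : 0 < θ) (hA : 0 ≤ A) (hy : 0 < y)
    (hh : hFun θ k₂ A y = 0) : k₂ / θ ^ 2 ≤ A * cosh (θ * y) := by
  have hk₂ : k₂ * y = A * θ * sinh (θ * y) := by
    rw [hFun] at hh
    rw [sinh_eq]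
    linear_combination -hh / 2
  have hsinh := sinh_le_mul_cosh (mul_pos hθ hy).le
  rw [div_le_iff₀ (by positivity), ← mul_le_mul_iff_left₀ hy]
  calc k₂ * y = A * θ * sinh (θ * y) := hk₂
    _ ≤ A * θ * (θ * y * cosh (θ * y)) := by gcongr
    _ = A * cosh (θ * y) * θ ^ 2 * y := by ring

theorem phiFun_self_sub_gFun (θ k₂ k₀ xv A : ℝ) (ybar : ℝ → ℝ) :
    phiFun θ k₂ k₀ xv A xv - gFun θ k₂ ybar A
      = 2 * A * cosh (θ * ybar A) - k₂ * ybar A ^ 2 + k₀ := by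
  simp only [phiFun, gFun, cosh_eq, sub_self, mul_zero, neg_zero, exp_zero]
  ring

theorem sub_mul_sq_le_mul_phiFun_sub_gFun {ρ θ k₂ k₀ α yv xv A : ℝ} {ybar : ℝ → ℝ}
    (hρ : 0 < ρ) (hθ : 0 < θ) (hA : 0 ≤ A) (hy : 0 < ybar A)
    (hh : hFun θ k₂ A (ybar A) = 0) (hk₂ : k₂ = α / ρ) (hk₀ : k₀ = yv / ρ - 2 * k₂ / θ ^ 2) :
    yv - α * ybar A ^ 2 ≤ ρ * (phiFun θ k₂ k₀ xv A xv - gFun θ k₂ ybar A) := by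
  have hcosh := le_mul_cosh_of_hFun_eq_zero hθ hA hy hh
  have hα : α = ρ * k₂ := by rw [hk₂]; field_simp
  have hexpand : ρ * (2 * A * cosh (θ * ybar A) - k₂ * ybar A ^ 2 + k₀)
      = yv - α * ybar A ^ 2 + 2 * ρ * (A * cosh (θ * ybar A) - k₂ / θ ^ 2) := by
    rw [hk₀, hα]
    field_simp
    ring
  rw [phiFun_self_sub_gFun, hexpand]
  linarith [mul_nonneg hρ.le (sub_nonneg.2 hcosh)]

theorem RFun_le_sub_mul_sq {b α xv yv Δ x y : ℝ} (hb : 0 ≤ b) (hα : 0 ≤ α) (hy : 0 ≤ y)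
    (hyx : y ≤ |x - xv|) (hyv : α * y ^ 2 ≤ yv) : RFun b α xv yv Δ x ≤ yv - α * y ^ 2 := by
  have hsq : y ^ 2 ≤ (x - xv) ^ 2 := by simpa only [sq_abs] using pow_le_pow_left₀ hy hyx 2
  unfold RFun
  split_ifs
  · linarith
  · linarith [mul_le_mul_of_nonneg_left hsq hα]
  · linarith

theorem stmt_19 (ρ σ Δ b θ k₂ k₀ α xv yv : ℝ)
    (hρ : 0 < ρ) (hσ : 0 < σ) (hΔ : 0 < Δ) (hb : 0 ≤ b)
    (hθ : θ = Real.sqrt (2 * ρ) / σ)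
    (hα : α = (Δ + b) / Δ ^ 2)
    (hxv : xv = Δ * (Δ + 2 * b) / (2 * (Δ + b)))
    (hyv : yv = Δ ^ 2 / (4 * (Δ + b)))
    (hk₂ : k₂ = α / ρ)
    (hk₀ : k₀ = yv / ρ - 2 * k₂ / θ ^ 2)
    (ybarA : ℝ → ℝ)
    (hybarA : ∀ A : ℝ, 0 < A → A < k₂ / θ ^ 2 →
      0 < ybarA A ∧ hFun θ k₂ A (ybarA A) = 0)
    (Ac : ℝ → ℝ)
    (hAc : ∀ c : ℝ, 0 < c →
      0 < Ac c ∧ Ac c < k₂ / θ ^ 2 ∧ gFun θ k₂ ybarA (Ac c) = c) :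
    ∀ c : ℝ, 0 < c → c < xiFun θ k₂ (Δ - xv) →
      ∀ x : ℝ, ybarA (Ac c) ≤ |x - xv| →
        RFun b α xv yv Δ x ≤ ρ * (phiFun θ k₂ k₀ xv (Ac c) xv - c) := by
  intro c hc hcξ x hx
  obtain ⟨hA, hAlt, hgc⟩ := hAc c hc
  obtain ⟨hy, hh⟩ := hybarA _ hA hAlt
  have hθ_pos : 0 < θ := hθ ▸ div_pos (Real.sqrt_pos.2 (by positivity)) hσ
  have hα_pos : 0 < α := hα ▸ by positivity
  have hk₂_nonneg : 0 ≤ k₂ := hk₂ ▸ by positivity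
  have hgap : Δ - xv = Δ ^ 2 / (2 * (Δ + b)) := by
    rw [hxv]
    field_simp
    ring
  have hvertex : α * (Δ - xv) ^ 2 = yv := by
    rw [hgap, hα, hyv]
    field_simp
    ring
  have hy_le : ybarA (Ac c) ≤ Δ - xv := by
    by_contra! hlt
    have hmono := xiFun_monotoneOn hθ_pos hk₂_nonneg
      (hgap ▸ by positivity : 0 ≤ Δ - xv) hy.le hlt.le
    rw [← gFun_eq_xiFun hθ_pos hy hh, hgc] at hmono
    linarith
  have hαy : α * ybarA (Ac c) ^ 2 ≤ yv := hvertex ▸ by gcongr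
  calc RFun b α xv yv Δ x ≤ yv - α * ybarA (Ac c) ^ 2 :=
        RFun_le_sub_mul_sq hb hα_pos.le hy.le hx hαy
    _ ≤ ρ * (phiFun θ k₂ k₀ xv (Ac c) xv - gFun θ k₂ ybarA (Ac c)) :=
        sub_mul_sq_le_mul_phiFun_sub_gFun hρ hθ_pos hA.le hy hh hk₂ hk₀
    _ = ρ * (phiFun θ k₂ k₀ xv (Ac c) xv - c) := by rw [hgc]
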